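/- For a = (a₁,a₂) ∈ p_n^{(2)} define the propagating envelope ℓ^env(a) = #(a₁) + (number of propagating parts of a₂ containing no propagating part of a₁). Then for all a, b ∈ p_n^{(2)}, ℓ^env(a∘b) ≤ ℓ^env(a). -/

import Mathlib

attribute [local instance] Classical.propDecidable

namespace RamifiedPartition

/-- The two-row set `[n] ⊔ [n]′`. -/
abbrev Row2 (n : ℕ) := Sum (Fin n) (Fin n)

/-- `p_n`: partitions (equivalence relations) of `[n] ⊔ [n]′`,
with `a ≤ b` meaning that `a` refines `b`. -/
abbrev PN (n : ℕ) := Setoid (Row2 n)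

/-- The three-row set `[n] ⊔ [n]′ ⊔ [n]″`. -/
abbrev Row3 (n : ℕ) := Sum (Fin n) (Sum (Fin n) (Fin n))

variable {n : ℕ}

/-- Embedding of the two-row set as rows 1,2 of the three-row set. -/
def emb12 : Row2 n → Row3 n := Sum.elim Sum.inl (fun i => Sum.inr (Sum.inl i))

/-- Embedding of the two-row set as rows 2,3 of the three-row set. -/
def emb23 : Row2 n → Row3 n :=
  Sum.elim (fun i => Sum.inr (Sum.inl i)) (fun i => Sum.inr (Sum.inr i))

/-- Embedding of the two-row set as rows 1,3 of the three-row set. -/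
def emb13 : Row2 n → Row3 n := Sum.elim Sum.inl (fun i => Sum.inr (Sum.inr i))

/-- `D_u(a,b)`: the equivalence relation on the three-row set generated by `a`
placed on rows 1,2 and `b` placed on rows 2,3. -/
def Du (a b : PN n) : Setoid (Row3 n) :=
  Relation.EqvGen.setoid (fun x y =>
    (∃ u v : Row2 n, a.r u v ∧ x = emb12 u ∧ y = emb12 v) ∨
    (∃ u v : Row2 n, b.r u v ∧ x = emb23 u ∧ y = emb23 v))

/-- The composite `a ∘ b`: the restriction of `D_u(a,b)` to rows 1,3
(relabelled as `[n] ⊔ [n]′`). -/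
def comp (a b : PN n) : PN n := Setoid.comap emb13 (Du a b)

/-- `c(a,b)`: the number of classes of `D_u(a,b)` contained entirely in the
middle row `[n]′`. -/
noncomputable def cnum (a b : PN n) : ℕ :=
  Nat.card {C : Quotient (Du a b) //
    ∀ x : Row3 n, Quotient.mk (Du a b) x = C → ∃ i : Fin n, x = Sum.inr (Sum.inl i)}

/-- The identity partition of `[n] ⊔ [n]′`, with parts `{i, i′}` for `i = 1,…,n`. -/
def oneP (n : ℕ) : PN n := Setoid.ker (Sum.elim id id)

end RamifiedPartition

namespace RamifiedPartition

variable {n : ℕ}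

/-- A part (equivalence class) of a partition of `[n] ⊔ [n]′` is propagating if
it contains elements of both `[n]` and `[n]′`. -/
def IsPropClass (a : PN n) (C : Quotient a) : Prop :=
  (∃ i : Fin n, Quotient.mk a (Sum.inl i) = C) ∧
  (∃ j : Fin n, Quotient.mk a (Sum.inr j) = C)

/-- `#(a)`: the number of propagating parts of `a`. -/
noncomputable def propNum (a : PN n) : ℕ := Nat.card {C : Quotient a // IsPropClass a C}

end RamifiedPartition

namespace RamifiedPartition

variable {n : ℕ}

/-- componentwise composite on `p_n^{(2)}` -/
def rcomp (a b : PN n × PN n) : PN n × PN n := (comp a.1 b.1, comp a.2 b.2)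

/-- The part `D` of `a₁` is contained in the part `C` of `a₂`. -/
def ClassLE (a₁ : PN n) (D : Quotient a₁) (a₂ : PN n) (C : Quotient a₂) : Prop :=
  ∀ x : Row2 n, Quotient.mk a₁ x = D → Quotient.mk a₂ x = C

/-- The multiset of entries of the propagating index `λ(a)` of `a = (a₁,a₂)`:
one entry for each propagating part `q` of `a₂`, namely the number of
propagating parts of `a₁` contained in `q`. -/
noncomputable def propIndexM (a : PN n × PN n) : Multiset ℕ :=
  letI : Fintype {C : Quotient a.2 // IsPropClass a.2 C} := Fintype.ofFinite _
  (Finset.univ : Finset {C : Quotient a.2 // IsPropClass a.2 C}).val.map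
    (fun C => Nat.card {D : Quotient a.1 // IsPropClass a.1 D ∧ ClassLE a.1 D a.2 C.1})

/-- The propagating index `λ(a)` as a weakly decreasing list. -/
noncomputable def propIndex (a : PN n × PN n) : List ℕ :=
  (Multiset.sort (propIndexM a) (· ≤ ·)).reverse

end RamifiedPartition

namespace RamifiedPartition

/-- The propagating envelope
`ℓ^env(a) = #(a₁) + (number of propagating parts of a₂ containing no
propagating part of a₁)`. -/
noncomputable def propEnv (a : PN n × PN n) : ℕ :=
  propNum a.1 +
    Nat.card {C : Quotient a.2 // IsPropClass a.2 C ∧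
      ¬ ∃ D : Quotient a.1, IsPropClass a.1 D ∧ ClassLE a.1 D a.2 C}


section Aux

variable {n : ℕ}

lemma du_rel_of_a {a b : PN n} {u v : Row2 n} (h : a.r u v) :
    (Du a b).r (emb12 u) (emb12 v) :=
  Relation.EqvGen.rel _ _ (Or.inl ⟨u, v, h, rfl, rfl⟩)

lemma du_mono {a₁ a₂ b₁ b₂ : PN n} (ha : a₁ ≤ a₂) (hb : b₁ ≤ b₂) {x y : Row3 n}
    (h : (Du a₁ b₁).r x y) : (Du a₂ b₂).r x y := by
  induction h with
  | rel x y hxy =>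
    refine Relation.EqvGen.rel _ _ ?_
    rcases hxy with ⟨u, v, huv, hx, hy⟩ | ⟨u, v, huv, hx, hy⟩
    · exact Or.inl ⟨u, v, Setoid.le_def.mp ha huv, hx, hy⟩
    · exact Or.inr ⟨u, v, Setoid.le_def.mp hb huv, hx, hy⟩
  | refl x => exact Relation.EqvGen.refl x
  | symm x y _ ih => exact Relation.EqvGen.symm x y ih
  | trans x y z _ _ ih1 ih2 => exact Relation.EqvGen.trans x y z ih1 ih2

/-- invariant: true on row 1, on row 2 iff `a`-related to row 1, false on row 3 -/
def Fm (a : PN n) : Row3 n → Prop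
  | Sum.inl _ => True
  | Sum.inr (Sum.inl k) => ∃ i : Fin n, a.r (Sum.inr k) (Sum.inl i)
  | Sum.inr (Sum.inr _) => False

lemma key (a b : PN n) {x y : Row3 n} (h : (Du a b).r x y) :
    (Fm a x ↔ Fm a y) ∨
      ∃ u v : Fin n, a.r (Sum.inl u) (Sum.inr v) ∧ (Du a b).r x (Sum.inl u) := by
  induction h with
  | refl x => exact Or.inl Iff.rfl
  | symm x y hxy ih =>
    rcases ih with hiff | ⟨u, v, huv, hpath⟩
    · exact Or.inl hiff.symm
    · exact Or.inr ⟨u, v, huv, (Du a b).trans ((Du a b).symm hxy) hpath⟩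
  | trans x y z hxy _ ih1 ih2 =>
    rcases ih1 with hiff1 | ⟨u, v, huv, hpath⟩
    · rcases ih2 with hiff2 | ⟨u, v, huv, hpath⟩
      · exact Or.inl (hiff1.trans hiff2)
      · exact Or.inr ⟨u, v, huv, (Du a b).trans hxy hpath⟩
    · exact Or.inr ⟨u, v, huv, hpath⟩
  | rel x y hxy =>
    rcases hxy with ⟨u, v, huv, hx, hy⟩ | ⟨u, v, huv, hx, hy⟩
    · subst hx; subst hy
      left
      rcases u with i | k <;> rcases v with i' | k'
      · exact Iff.rfl
      · simp only [emb12, Sum.elim_inl, Sum.elim_inr, Fm, true_iff]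
        exact ⟨i, a.symm huv⟩
      · simp only [emb12, Sum.elim_inl, Sum.elim_inr, Fm, iff_true]
        exact ⟨i', huv⟩
      · simp only [emb12, Sum.elim_inr, Fm]
        constructor
        · rintro ⟨i, hi⟩; exact ⟨i, a.trans (a.symm huv) hi⟩
        · rintro ⟨i, hi⟩; exact ⟨i, a.trans huv hi⟩
    · subst hx; subst hy
      have hstep : (Du a b).r (emb23 u) (emb23 v) :=
        Relation.EqvGen.rel _ _ (Or.inr ⟨u, v, huv, rfl, rfl⟩)
      rcases u with k | j <;> rcases v with k' | j'
      · by_cases h1 : ∃ i : Fin n, a.r (Sum.inr k) (Sum.inl i)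
        · rcases h1 with ⟨i, hi⟩
          exact Or.inr ⟨i, k, a.symm hi, du_rel_of_a (a := a) (b := b) (u := Sum.inr k)
            (v := Sum.inl i) hi⟩
        · by_cases h2 : ∃ i : Fin n, a.r (Sum.inr k') (Sum.inl i)
          · rcases h2 with ⟨i, hi⟩
            exact Or.inr ⟨i, k', a.symm hi, (Du a b).trans hstep
              (du_rel_of_a (a := a) (b := b) (u := Sum.inr k') (v := Sum.inl i) hi)⟩
          · refine Or.inl ?_
            simp only [emb23, Sum.elim_inl, Fm]
            exact iff_of_false h1 h2
      · by_cases h1 : ∃ i : Fin n, a.r (Sum.inr k) (Sum.inl i)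
        · rcases h1 with ⟨i, hi⟩
          exact Or.inr ⟨i, k, a.symm hi, du_rel_of_a (a := a) (b := b) (u := Sum.inr k)
            (v := Sum.inl i) hi⟩
        · refine Or.inl ?_
          simp only [emb23, Sum.elim_inl, Sum.elim_inr, Fm]
          exact iff_of_false h1 not_false
      · by_cases h2 : ∃ i : Fin n, a.r (Sum.inr k') (Sum.inl i)
        · rcases h2 with ⟨i, hi⟩
          exact Or.inr ⟨i, k', a.symm hi, (Du a b).trans hstep
            (du_rel_of_a (a := a) (b := b) (u := Sum.inr k') (v := Sum.inl i) hi)⟩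
        · refine Or.inl ?_
          simp only [emb23, Sum.elim_inl, Sum.elim_inr, Fm]
          exact iff_of_false not_false h2
      · refine Or.inl ?_
        simp only [emb23, Sum.elim_inr, Fm]

lemma prop_in_class (a b : PN n) {i j : Fin n}
    (h : (Du a b).r (Sum.inl i) (Sum.inr (Sum.inr j))) :
    ∃ u v : Fin n, a.r (Sum.inl u) (Sum.inr v) ∧ (Du a b).r (Sum.inl i) (Sum.inl u) := by
  rcases key a b h with hiff | hesc
  · exact absurd (hiff.mp trivial) not_false
  · exact hesc

/-- The specification of the injection used in the proof of `propEnv_comp_le`. -/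
def Spec (a₁ a₂ b₁ b₂ : PN n) :
    Quotient (comp a₁ b₁) ⊕ Quotient (comp a₂ b₂) → Quotient a₁ ⊕ Quotient a₂ → Prop
  | Sum.inl P, Sum.inl D => ∃ i u : Fin n, Quotient.mk (comp a₁ b₁) (Sum.inl i) = P ∧
      Quotient.mk a₁ (Sum.inl u) = D ∧ (Du a₁ b₁).r (Sum.inl i) (Sum.inl u)
  | Sum.inr C, Sum.inl D => ∃ i u : Fin n, Quotient.mk (comp a₂ b₂) (Sum.inl i) = C ∧
      Quotient.mk a₁ (Sum.inl u) = D ∧ (Du a₂ b₂).r (Sum.inl i) (Sum.inl u)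
  | Sum.inr C, Sum.inr E => ∃ i u : Fin n, Quotient.mk (comp a₂ b₂) (Sum.inl i) = C ∧
      Quotient.mk a₂ (Sum.inl u) = E ∧ (Du a₂ b₂).r (Sum.inl i) (Sum.inl u)
  | Sum.inl _, Sum.inr _ => False

lemma class_eq_of_chain {a b : PN n} {i i' u u' : Fin n}
    (hrel : a.r (Sum.inl u) (Sum.inl u'))
    (hp : (Du a b).r (Sum.inl i) (Sum.inl u))
    (hp' : (Du a b).r (Sum.inl i') (Sum.inl u')) :
    Quotient.mk (comp a b) (Sum.inl i) = Quotient.mk (comp a b) (Sum.inl i') := by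
  have hchain : (Du a b).r (Sum.inl i) (Sum.inl i') :=
    (Du a b).trans ((Du a b).trans hp
      (du_rel_of_a (a := a) (b := b) (u := Sum.inl u) (v := Sum.inl u') hrel))
      ((Du a b).symm hp')
  exact Quotient.sound hchain

lemma mixed_false {a₁ a₂ b₁ b₂ : PN n} (ha : a₁ ≤ a₂) (hb : b₁ ≤ b₂)
    {P : Quotient (comp a₁ b₁)} {C : Quotient (comp a₂ b₂)} {i i' u u' : Fin n}
    (hi : Quotient.mk (comp a₁ b₁) (Sum.inl i) = P)
    (hi' : Quotient.mk (comp a₂ b₂) (Sum.inl i') = C)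
    (hu : Quotient.mk a₁ (Sum.inl u) = Quotient.mk a₁ (Sum.inl u'))
    (hp : (Du a₁ b₁).r (Sum.inl i) (Sum.inl u))
    (hp' : (Du a₂ b₂).r (Sum.inl i') (Sum.inl u'))
    (hP : IsPropClass (comp a₁ b₁) P)
    (hC : ¬ ∃ D : Quotient (comp a₁ b₁), IsPropClass (comp a₁ b₁) D ∧
      ClassLE (comp a₁ b₁) D (comp a₂ b₂) C) : False := by
  have hrel : a₁.r (Sum.inl u) (Sum.inl u') := Quotient.exact hu
  have hchain : (Du a₂ b₂).r (Sum.inl i') (Sum.inl i) :=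
    (Du a₂ b₂).trans ((Du a₂ b₂).trans hp'
      ((Du a₂ b₂).symm (du_rel_of_a (a := a₂) (b := b₂) (u := Sum.inl u) (v := Sum.inl u')
        (Setoid.le_def.mp ha hrel))))
      ((Du a₂ b₂).symm (du_mono ha hb hp))
  have hiC : Quotient.mk (comp a₂ b₂) (Sum.inl i) = C := by
    have h9 : (comp a₂ b₂).r (Sum.inl i) (Sum.inl i') := (Du a₂ b₂).symm hchain
    exact (Quotient.sound h9).trans hi'
  refine hC ⟨P, hP, ?_⟩
  intro x hx
  have hx1 : (comp a₁ b₁).r x (Sum.inl i) := Quotient.exact (hx.trans hi.symm)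
  have hx2 : (Du a₂ b₂).r (emb13 x) (Sum.inl i) := du_mono ha hb hx1
  have hx3 : (comp a₂ b₂).r x (Sum.inl i) := hx2
  exact (Quotient.sound hx3).trans hiC

end Aux

/-- for all `a, b ∈ p_n^{(2)}`, `ℓ^env(a∘b) ≤ ℓ^env(a)`. -/
theorem propEnv_comp_le (n : ℕ) (a b : PN n × PN n)
    (ha : a.1 ≤ a.2) (hb : b.1 ≤ b.2) :
    propEnv (rcomp a b) ≤ propEnv a := by
  classical
  obtain ⟨a₁, a₂⟩ := a
  obtain ⟨b₁, b₂⟩ := b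
  replace ha : a₁ ≤ a₂ := ha
  replace hb : b₁ ≤ b₂ := hb
  let c₁ : PN n := comp a₁ b₁
  let c₂ : PN n := comp a₂ b₂
  let T1 := {C : Quotient c₁ // IsPropClass c₁ C}
  let T2 := {C : Quotient c₂ // IsPropClass c₂ C ∧
      ¬ ∃ D : Quotient c₁, IsPropClass c₁ D ∧ ClassLE c₁ D c₂ C}
  let U1 := {C : Quotient a₁ // IsPropClass a₁ C}
  let U2 := {C : Quotient a₂ // IsPropClass a₂ C ∧
      ¬ ∃ D : Quotient a₁, IsPropClass a₁ D ∧ ClassLE a₁ D a₂ C}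
  have hex : ∀ s : T1 ⊕ T2, ∃ t : U1 ⊕ U2,
      Spec a₁ a₂ b₁ b₂ (Sum.map Subtype.val Subtype.val s)
        (Sum.map Subtype.val Subtype.val t) := by
    rintro (⟨P, ⟨i, hi⟩, ⟨j, hj⟩⟩ | ⟨C, ⟨⟨i, hi⟩, ⟨j, hj⟩⟩, hC2⟩)
    · have hc : c₁.r (Sum.inl i) (Sum.inr j) := Quotient.exact (hi.trans hj.symm)
      have hij : (Du a₁ b₁).r (Sum.inl i) (Sum.inr (Sum.inr j)) := hc
      obtain ⟨u, v, huv, hpath⟩ := prop_in_class a₁ b₁ hij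
      refine ⟨Sum.inl ⟨Quotient.mk a₁ (Sum.inl u),
        ⟨u, rfl⟩, ⟨v, Quotient.sound (a₁.symm huv)⟩⟩, ?_⟩
      exact ⟨i, u, hi, rfl, hpath⟩
    · have hc : c₂.r (Sum.inl i) (Sum.inr j) := Quotient.exact (hi.trans hj.symm)
      have hij : (Du a₂ b₂).r (Sum.inl i) (Sum.inr (Sum.inr j)) := hc
      by_cases hD : ∃ u v : Fin n, a₁.r (Sum.inl u) (Sum.inr v) ∧
          (Du a₂ b₂).r (Sum.inl i) (Sum.inl u)
      · obtain ⟨u, v, huv, hpath⟩ := hD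
        refine ⟨Sum.inl ⟨Quotient.mk a₁ (Sum.inl u),
          ⟨u, rfl⟩, ⟨v, Quotient.sound (a₁.symm huv)⟩⟩, ?_⟩
        exact ⟨i, u, hi, rfl, hpath⟩
      · obtain ⟨u, v, huv, hpath⟩ := prop_in_class a₂ b₂ hij
        refine ⟨Sum.inr ⟨Quotient.mk a₂ (Sum.inl u),
          ⟨⟨u, rfl⟩, ⟨v, Quotient.sound (a₂.symm huv)⟩⟩, ?_⟩, ?_⟩
        · rintro ⟨D', ⟨⟨u', hu'⟩, ⟨v', hv'⟩⟩, hle⟩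
          have huv' : a₁.r (Sum.inl u') (Sum.inr v') := Quotient.exact (hu'.trans hv'.symm)
          have h2 : Quotient.mk a₂ (Sum.inl u') = Quotient.mk a₂ (Sum.inl u) := hle _ hu'
          have hrel : a₂.r (Sum.inl u) (Sum.inl u') := a₂.symm (Quotient.exact h2)
          exact hD ⟨u', v', huv', (Du a₂ b₂).trans hpath
            (du_rel_of_a (a := a₂) (b := b₂) (u := Sum.inl u) (v := Sum.inl u') hrel)⟩
        · exact ⟨i, u, hi, rfl, hpath⟩
  choose f hf using hex
  have hinj : Function.Injective f := by
    intro s s' heq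
    have hs := hf s
    have hs' := hf s'
    rw [heq] at hs
    obtain s | s := s
    · obtain s' | s' := s'
      · rcases hft : f (Sum.inl s') with t | t <;> rw [hft] at hs hs' <;>
          simp only [Sum.map_inl, Sum.map_inr, Spec] at hs hs'
        · obtain ⟨i, u, hi, hu, hp⟩ := hs
          obtain ⟨i', u', hi', hu', hp'⟩ := hs'
          have heqc := class_eq_of_chain (Quotient.exact (hu.trans hu'.symm)) hp hp'
          exact congrArg Sum.inl (Subtype.ext ((hi.symm.trans heqc).trans hi'))
      · rcases hft : f (Sum.inr s') with t | t <;> rw [hft] at hs hs' <;>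
          simp only [Sum.map_inl, Sum.map_inr, Spec] at hs hs'
        · exfalso
          obtain ⟨i, u, hi, hu, hp⟩ := hs
          obtain ⟨i', u', hi', hu', hp'⟩ := hs'
          exact mixed_false ha hb hi hi' (hu.trans hu'.symm) hp hp' s.2 s'.2.2
    · obtain s' | s' := s'
      · rcases hft : f (Sum.inl s') with t | t <;> rw [hft] at hs hs' <;>
          simp only [Sum.map_inl, Sum.map_inr, Spec] at hs hs'
        · exfalso
          obtain ⟨i, u, hi, hu, hp⟩ := hs
          obtain ⟨i', u', hi', hu', hp'⟩ := hs'
          exact mixed_false ha hb hi' hi (hu'.trans hu.symm) hp' hp s'.2 s.2.2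
      · rcases hft : f (Sum.inr s') with t | t <;> rw [hft] at hs hs' <;>
          simp only [Sum.map_inl, Sum.map_inr, Spec] at hs hs'
        · obtain ⟨i, u, hi, hu, hp⟩ := hs
          obtain ⟨i', u', hi', hu', hp'⟩ := hs'
          have heqc := class_eq_of_chain
            (Setoid.le_def.mp ha (Quotient.exact (hu.trans hu'.symm))) hp hp'
          exact congrArg Sum.inr (Subtype.ext ((hi.symm.trans heqc).trans hi'))
        · obtain ⟨i, u, hi, hu, hp⟩ := hs
          obtain ⟨i', u', hi', hu', hp'⟩ := hs'
          have heqc := class_eq_of_chain (Quotient.exact (hu.trans hu'.symm)) hp hp'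
          exact congrArg Sum.inr (Subtype.ext ((hi.symm.trans heqc).trans hi'))
  have hcard : Nat.card (T1 ⊕ T2) ≤ Nat.card (U1 ⊕ U2) :=
    Nat.card_le_card_of_injective f hinj
  rw [Nat.card_sum, Nat.card_sum] at hcard
  have e1 : propEnv (rcomp (a₁, a₂) (b₁, b₂)) = Nat.card T1 + Nat.card T2 := rfl
  have e2 : propEnv (a₁, a₂) = Nat.card U1 + Nat.card U2 := rfl
  rw [e1, e2]
  exact hcard

end RamifiedPartition
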